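/- arXiv:2404.11679 — 2 statements merged into one kernel-verified Lean document; each statement's English description precedes it below -/
import Mathlib

section
/- Let G ⊆ [0,1]^d and let B be a collection of dyadic cubes in [0,1]^d such that 3Q ∩ G ≠ ∅ for every Q ∈ B, and such that each x ∈ G is contained in at most N different cubes 7Q with Q ∈ B. Then, with M = (3^d + 1)^N, there exist sets F₁, F₂, …, F_M such that (i) G = F₁ ∪ F₂ ∪ … ∪ F_M, and (ii) whenever x, y ∈ F_i are distinct and Q is a dyadic cube of minimal side length with x, y ∈ 3Q, then Q ∉ B. -/
open Metric

noncomputable section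

/-- The closed unit cube `[0,1]^d` in Euclidean space. -/
def unitCube (d : ℕ) : Set (EuclideanSpace ℝ (Fin d)) := {x | ∀ i, 0 ≤ x i ∧ x i ≤ 1}

/-- The dyadic cube `Q = Π_i [a_i·2^{-k}, (a_i+1)·2^{-k})`. -/
def dyCube (d k : ℕ) (a : Fin d → ℕ) : Set (EuclideanSpace ℝ (Fin d)) :=
  {x | ∀ i, (a i : ℝ) * 2 ^ (-(k : ℤ)) ≤ x i ∧ x i < ((a i : ℝ) + 1) * 2 ^ (-(k : ℤ))}

/-- The tripled dyadic cube `3Q = Π_i [(a_i-1)·2^{-k}, (a_i+2)·2^{-k})`. -/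
def dyCube3 (d k : ℕ) (a : Fin d → ℕ) : Set (EuclideanSpace ℝ (Fin d)) :=
  {x | ∀ i, ((a i : ℝ) - 1) * 2 ^ (-(k : ℤ)) ≤ x i ∧ x i < ((a i : ℝ) + 2) * 2 ^ (-(k : ℤ))}

/-- The septupled dyadic cube `7Q = Π_i [(a_i-3)·2^{-k}, (a_i+4)·2^{-k})`. -/
def dyCube7 (d k : ℕ) (a : Fin d → ℕ) : Set (EuclideanSpace ℝ (Fin d)) :=
  {x | ∀ i, ((a i : ℝ) - 3) * 2 ^ (-(k : ℤ)) ≤ x i ∧ x i < ((a i : ℝ) + 4) * 2 ^ (-(k : ℤ))}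

/-- `sparse(E, 7Q) = sup { dist(x, 7Q ∩ E) : x ∈ 7Q } / side(7Q)` with `side(7Q) = 7·2^{-k}`. -/
def sparse7 {d : ℕ} (E : Set (EuclideanSpace ℝ (Fin d))) (k : ℕ) (a : Fin d → ℕ) : ℝ :=
  (⨆ x : (dyCube7 d k a),
    Metric.infDist (x : EuclideanSpace ℝ (Fin d)) (dyCube7 d k a ∩ E)) / (7 * 2 ^ (-(k : ℤ)))

/-- An index for a dyadic cube of `[0,1]^d`: a scale `k` and a corner `a : Fin d → Fin (2^k)`. -/
abbrev DyIdx (d : ℕ) := Σ k : ℕ, Fin d → Fin (2 ^ k)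

/-- The tripled cube of an indexed dyadic cube. -/
def idx3 {d : ℕ} (q : DyIdx d) : Set (EuclideanSpace ℝ (Fin d)) :=
  dyCube3 d q.1 (fun i => (q.2 i : ℕ))

/-- The septupled cube of an indexed dyadic cube. -/
def idx7 {d : ℕ} (q : DyIdx d) : Set (EuclideanSpace ℝ (Fin d)) :=
  dyCube7 d q.1 (fun i => (q.2 i : ℕ))

namespace CodingAux

open Classical Set

variable {d : ℕ}

/-! ### capped floors -/

/-- capped floor of `z` at scale `t`. -/
def cf (z : ℝ) (t : ℕ) : ℤ := min ⌊z * 2 ^ t⌋ (2 ^ t - 1)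

lemma cf_nonneg {z : ℝ} (hz : 0 ≤ z) (t : ℕ) : 0 ≤ cf z t := by
  have h1 : (0:ℤ) ≤ ⌊z * 2 ^ t⌋ := by
    refine Int.le_floor.2 ?_
    have : (0:ℝ) ≤ z * 2 ^ t := mul_nonneg hz (by positivity)
    simpa using this
  have h2 : (0:ℤ) ≤ 2 ^ t - 1 := by
    have : (0:ℤ) < 2 ^ t := by positivity
    omega
  exact le_min h1 h2

lemma cf_le (z : ℝ) (t : ℕ) : cf z t ≤ 2 ^ t - 1 := min_le_right _ _

lemma cf_le_floor (z : ℝ) (t : ℕ) : cf z t ≤ ⌊z * 2 ^ t⌋ := min_le_left _ _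

lemma cf_le_mul (z : ℝ) (t : ℕ) : (cf z t : ℝ) ≤ z * 2 ^ t :=
  (Int.cast_le.2 (cf_le_floor z t)).trans (Int.floor_le _)

lemma mul_le_cf_add_one {z : ℝ} (hz : z ≤ 1) (t : ℕ) : z * 2 ^ t ≤ (cf z t : ℝ) + 1 := by
  rcases le_or_gt (⌊z * 2 ^ t⌋) (2 ^ t - 1) with h | h
  · have he : cf z t = ⌊z * 2 ^ t⌋ := min_eq_left h
    rw [he]
    exact (Int.lt_floor_add_one _).le
  · have he : cf z t = 2 ^ t - 1 := min_eq_right h.le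
    rw [he]
    have h2 : z * 2 ^ t ≤ 2 ^ t := by
      nlinarith [pow_pos (by norm_num : (0:ℝ) < 2) t]
    push_cast
    linarith

lemma two_cf_le_cf_succ {z : ℝ} (hz : 0 ≤ z) (t : ℕ) : 2 * cf z t ≤ cf z (t + 1) := by
  refine le_min ?_ ?_
  · refine Int.le_floor.2 ?_
    have h1 := cf_le_mul z t
    push_cast
    calc (2 : ℝ) * (cf z t : ℤ) ≤ 2 * (z * 2 ^ t) := by push_cast; linarith
    _ = z * 2 ^ (t + 1) := by ring
  · have := cf_le z t
    have h2 : (2:ℤ) ^ (t + 1) = 2 * 2 ^ t := by ring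
    omega

lemma cf_succ_le_two_cf_add_one (z : ℝ) (t : ℕ) : cf z (t + 1) ≤ 2 * cf z t + 1 := by
  rcases le_or_gt (⌊z * 2 ^ t⌋) (2 ^ t - 1) with h | h
  · have h1 : cf z t = ⌊z * 2 ^ t⌋ := min_eq_left h
    have h2 : cf z (t + 1) ≤ ⌊z * 2 ^ (t + 1)⌋ := cf_le_floor _ _
    have h4 : z * 2 ^ (t + 1) < 2 * ⌊z * 2 ^ t⌋ + 2 := by
      have h5 := Int.lt_floor_add_one (z * 2 ^ t)
      have h6 : z * 2 ^ (t+1) = 2 * (z * 2 ^ t) := by ring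
      rw [h6]
      push_cast
      linarith
    have h3 : ⌊z * 2 ^ (t + 1)⌋ < 2 * ⌊z * 2 ^ t⌋ + 2 := by
      refine Int.floor_lt.2 ?_
      push_cast
      push_cast at h4
      linarith
    rw [h1]
    omega
  · have h2 : cf z (t + 1) ≤ 2 ^ (t + 1) - 1 := cf_le _ _
    have h1 : cf z t = 2 ^ t - 1 := min_eq_right h.le
    rw [h1]
    have h3 : (2:ℤ) ^ (t+1) = 2 * 2 ^ t := by ring
    omega

/-! ### conversion between cube membership and capped-floor windows -/

lemma pow_cancel (t : ℕ) : (2 : ℝ) ^ (-(t : ℤ)) * 2 ^ t = 1 := by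
  rw [zpow_neg, zpow_natCast]
  exact inv_mul_cancel₀ (by positivity)

lemma mem_scale_le {c x : ℝ} {t : ℕ} (h : c * 2 ^ (-(t : ℤ)) ≤ x) : c ≤ x * 2 ^ t := by
  have hp : (0:ℝ) < 2 ^ t := by positivity
  have h2 := mul_le_mul_of_nonneg_right h hp.le
  calc c = c * ((2:ℝ) ^ (-(t:ℤ)) * 2 ^ t) := by rw [pow_cancel]; ring
  _ = c * 2 ^ (-(t:ℤ)) * 2 ^ t := by ring
  _ ≤ x * 2 ^ t := h2

lemma mem_scale_lt {c x : ℝ} {t : ℕ} (h : x < c * 2 ^ (-(t : ℤ))) : x * 2 ^ t < c := by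
  have hp : (0:ℝ) < 2 ^ t := by positivity
  have h2 := mul_lt_mul_of_pos_right h hp
  calc x * 2 ^ t < c * 2 ^ (-(t:ℤ)) * 2 ^ t := h2
  _ = c * ((2:ℝ) ^ (-(t:ℤ)) * 2 ^ t) := by ring
  _ = c := by rw [pow_cancel]; ring

lemma scale_mem_le {c x : ℝ} {t : ℕ} (h : c ≤ x * 2 ^ t) : c * 2 ^ (-(t : ℤ)) ≤ x := by
  have hp : (0:ℝ) < 2 ^ (-(t:ℤ)) := by positivity
  have h2 := mul_le_mul_of_nonneg_right h hp.le
  calc c * 2 ^ (-(t:ℤ)) ≤ x * 2 ^ t * 2 ^ (-(t:ℤ)) := h2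
  _ = x * (2 ^ (-(t:ℤ)) * 2 ^ t) := by ring
  _ = x := by rw [pow_cancel]; ring

lemma scale_mem_lt {c x : ℝ} {t : ℕ} (h : x * 2 ^ t < c) : x < c * 2 ^ (-(t : ℤ)) := by
  have hp : (0:ℝ) < 2 ^ (-(t:ℤ)) := by positivity
  have h2 := mul_lt_mul_of_pos_right h hp
  calc x = x * (2 ^ (-(t:ℤ)) * 2 ^ t) := by rw [pow_cancel]; ring
  _ = x * 2 ^ t * 2 ^ (-(t:ℤ)) := by ring
  _ < c * 2 ^ (-(t:ℤ)) := h2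

/-- membership in the tripled cube gives a window for the capped floor. -/
lemma cf_window_of_mem3 {x : EuclideanSpace ℝ (Fin d)} {q : DyIdx d}
    (hx : x ∈ idx3 q) (i : Fin d) :
    ((q.2 i : ℕ) : ℤ) - 1 ≤ cf (x i) q.1 ∧ cf (x i) q.1 ≤ ((q.2 i : ℕ) : ℤ) + 1 := by
  obtain ⟨h1, h2⟩ := hx i
  set b : ℤ := ((q.2 i : ℕ) : ℤ) with hb
  have hble : b ≤ 2 ^ q.1 - 1 := by
    have h3 := (q.2 i).isLt
    have h4 : b < (2:ℤ) ^ q.1 := by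
      rw [hb]
      exact_mod_cast h3
    omega
  have h5 := mem_scale_le h1
  have h6 := mem_scale_lt h2
  constructor
  · have hfl : b - 1 ≤ ⌊x i * 2 ^ q.1⌋ := by
      refine Int.le_floor.2 ?_
      rw [hb]
      push_cast
      push_cast at h5
      linarith
    exact le_min hfl (by omega)
  · refine (cf_le_floor _ _).trans ?_
    have h7 : ⌊x i * 2 ^ q.1⌋ < b + 2 := by
      refine Int.floor_lt.2 ?_
      rw [hb]
      push_cast
      push_cast at h6
      linarith
    omega

lemma mem3_sub_mem7 {x : EuclideanSpace ℝ (Fin d)} {q : DyIdx d} (hx : x ∈ idx3 q) :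
    x ∈ idx7 q := by
  intro i
  obtain ⟨h1, h2⟩ := hx i
  have hs : (0:ℝ) < 2 ^ (-(q.1 : ℤ)) := by positivity
  constructor
  · nlinarith
  · nlinarith

/-- the key geometric fact: if `z, x ∈ 3Q` and `x ∈ 3Q'` with `Q'` strictly coarser
than `Q`, then `z ∈ 7Q'`. -/
lemma mem7_of_coarser {z x : EuclideanSpace ℝ (Fin d)} {q q' : DyIdx d}
    (ht : q'.1 < q.1) (hz : z ∈ idx3 q) (hx : x ∈ idx3 q) (hx' : x ∈ idx3 q') :
    z ∈ idx7 q' := by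
  intro i
  obtain ⟨hz1, hz2⟩ := hz i
  obtain ⟨hx1, hx2⟩ := hx i
  obtain ⟨hx'1, hx'2⟩ := hx' i
  set s : ℝ := 2 ^ (-(q.1 : ℤ)) with hsdef
  set s' : ℝ := 2 ^ (-(q'.1 : ℤ)) with hs'def
  have hs : (0:ℝ) < s := by rw [hsdef]; positivity
  have hs' : (0:ℝ) < s' := by rw [hs'def]; positivity
  have h2s : 2 * s ≤ s' := by
    have h1 : (2:ℝ) ^ ((1 : ℤ) - (q.1 : ℤ)) ≤ 2 ^ (-(q'.1 : ℤ)) := by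
      apply zpow_le_zpow_right₀ (by norm_num)
      omega
    have h0 : 2 * s = (2:ℝ) ^ ((1:ℤ) - (q.1:ℤ)) := by
      rw [hsdef, sub_eq_add_neg, zpow_add₀ (by norm_num : (2:ℝ) ≠ 0)]
      norm_num
    rw [h0]
    exact h1.trans_eq hs'def.symm
  constructor
  · nlinarith
  · nlinarith

/-! ### the slot colouring of `B` -/

/-- the coarser conflict neighbours of a cube. -/
def NbrS (B : Set (DyIdx d)) (G : Set (EuclideanSpace ℝ (Fin d))) (q : DyIdx d) :
    Set (DyIdx d) :=
  {q' | q' ∈ B ∧ q'.1 < q.1 ∧ ∃ x, x ∈ G ∧ x ∈ idx3 q' ∧ x ∈ idx3 q}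

/-- auxiliary recursion assigning slots scale by scale. -/
def slotF (B : Set (DyIdx d)) (G : Set (EuclideanSpace ℝ (Fin d))) : ℕ → DyIdx d → ℕ
  | 0 => fun _ => 0
  | (t + 1) => fun q =>
      if q.1 = t then sInf ((slotF B G t '' NbrS B G q)ᶜ) else slotF B G t q

/-- the slot of a cube. -/
def slot (B : Set (DyIdx d)) (G : Set (EuclideanSpace ℝ (Fin d))) (q : DyIdx d) : ℕ :=
  slotF B G (q.1 + 1) q

lemma slotF_stable (B : Set (DyIdx d)) (G : Set (EuclideanSpace ℝ (Fin d))) :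
    ∀ t (q : DyIdx d), q.1 + 1 ≤ t → slotF B G t q = slot B G q := by
  intro t
  induction t with
  | zero => intro q hq; omega
  | succ t ih =>
    intro q hq
    rcases Nat.lt_or_ge q.1 t with h | h
    · have he : slotF B G (t + 1) q = slotF B G t q := by
        simp only [slotF]
        rw [if_neg (by omega)]
      rw [he, ih q (by omega)]
    · have hq1 : q.1 = t := by omega
      subst hq1
      rfl

lemma slot_eq (B : Set (DyIdx d)) (G : Set (EuclideanSpace ℝ (Fin d))) (q : DyIdx d) :
    slot B G q = sInf ((slotF B G q.1 '' NbrS B G q)ᶜ) := by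
  simp [slot, slotF]

/-- the set of cubes of `B` whose septuple contains a fixed point of `G` is finite
with at most `N` elements. -/
lemma seven_finite {N : ℕ} {G : Set (EuclideanSpace ℝ (Fin d))} {B : Set (DyIdx d)}
    (hover : ∀ x ∈ G, ∀ S : Finset (DyIdx d),
      (↑S : Set (DyIdx d)) ⊆ B → (∀ q ∈ S, x ∈ idx7 q) → S.card ≤ N)
    {z : EuclideanSpace ℝ (Fin d)} (hz : z ∈ G) :
    {r : DyIdx d | r ∈ B ∧ z ∈ idx7 r}.Finite ∧
      {r : DyIdx d | r ∈ B ∧ z ∈ idx7 r}.ncard ≤ N := by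
  set S := {r : DyIdx d | r ∈ B ∧ z ∈ idx7 r} with hS
  have hfin : S.Finite := by
    by_contra hinf
    have hinf' : S.Infinite := hinf
    obtain ⟨T, hTsub, hTcard⟩ := hinf'.exists_subset_card_eq (N + 1)
    have hb := hover z hz T (fun r hr => (hTsub hr).1) (fun r hr => (hTsub hr).2)
    omega
  refine ⟨hfin, ?_⟩
  have hb := hover z hz hfin.toFinset
    (fun r hr => ((hfin.mem_toFinset).1 hr).1)
    (fun r hr => ((hfin.mem_toFinset).1 hr).2)
  rwa [Set.ncard_eq_toFinset_card _ hfin]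

/-- with a meeting point for `q`, the coarser conflict neighbours are few. -/
lemma nbr_small {N : ℕ} {G : Set (EuclideanSpace ℝ (Fin d))} {B : Set (DyIdx d)}
    (hover : ∀ x ∈ G, ∀ S : Finset (DyIdx d),
      (↑S : Set (DyIdx d)) ⊆ B → (∀ q ∈ S, x ∈ idx7 q) → S.card ≤ N)
    {q : DyIdx d} (hq : q ∈ B) {z : EuclideanSpace ℝ (Fin d)}
    (hz3 : z ∈ idx3 q) (hzG : z ∈ G) :
    (NbrS B G q).Finite ∧ (NbrS B G q).ncard < N := by
  obtain ⟨hSfin, hScard⟩ := seven_finite hover hzG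
  have hsub : NbrS B G q ⊆ {r : DyIdx d | r ∈ B ∧ z ∈ idx7 r} := by
    rintro q' ⟨hq'B, hlt, x, hxG, hx3', hx3⟩
    exact ⟨hq'B, mem7_of_coarser hlt hz3 hx3 hx3'⟩
  have hqS : q ∈ {r : DyIdx d | r ∈ B ∧ z ∈ idx7 r} := ⟨hq, mem3_sub_mem7 hz3⟩
  have hqN : q ∉ NbrS B G q := by
    rintro ⟨_, hlt, _⟩
    omega
  have hss : NbrS B G q ⊂ {r : DyIdx d | r ∈ B ∧ z ∈ idx7 r} :=
    ⟨hsub, fun hcon => hqN (hcon hqS)⟩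
  exact ⟨hSfin.subset hsub, lt_of_lt_of_le (Set.ncard_lt_ncard hss hSfin) hScard⟩

lemma slot_lt {N : ℕ} {G : Set (EuclideanSpace ℝ (Fin d))} {B : Set (DyIdx d)}
    (hover : ∀ x ∈ G, ∀ S : Finset (DyIdx d),
      (↑S : Set (DyIdx d)) ⊆ B → (∀ q ∈ S, x ∈ idx7 q) → S.card ≤ N)
    {q : DyIdx d} (hq : q ∈ B) {z : EuclideanSpace ℝ (Fin d)}
    (hz3 : z ∈ idx3 q) (hzG : z ∈ G) : slot B G q < N := by
  obtain ⟨hfin, hcard⟩ := nbr_small hover hq hz3 hzG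
  set U := slotF B G q.1 '' NbrS B G q with hU
  have hUfin : U.Finite := hfin.image _
  have hUcard : U.ncard < N := lt_of_le_of_lt (Set.ncard_image_le hfin) hcard
  have hc : ∃ c, c < N ∧ c ∉ U := by
    by_contra hcon
    push_neg at hcon
    have hsub : (↑(Finset.range N) : Set ℕ) ⊆ U := by
      intro c hcr
      exact hcon c (by simpa using hcr)
    have hle := Set.ncard_le_ncard hsub hUfin
    simp only [Set.ncard_coe_finset, Finset.card_range] at hle
    omega
  obtain ⟨c, hcN, hcU⟩ := hc
  rw [slot_eq]
  exact lt_of_le_of_lt (Nat.sInf_le hcU) hcN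

lemma slot_ne {N : ℕ} {G : Set (EuclideanSpace ℝ (Fin d))} {B : Set (DyIdx d)}
    (hover : ∀ x ∈ G, ∀ S : Finset (DyIdx d),
      (↑S : Set (DyIdx d)) ⊆ B → (∀ q ∈ S, x ∈ idx7 q) → S.card ≤ N)
    {q q' : DyIdx d} (hq : q ∈ B) {z : EuclideanSpace ℝ (Fin d)}
    (hz3 : z ∈ idx3 q) (hzG : z ∈ G) (hq' : q' ∈ NbrS B G q) :
    slot B G q ≠ slot B G q' := by
  obtain ⟨hfin, _⟩ := nbr_small hover hq hz3 hzG
  set U := slotF B G q.1 '' NbrS B G q with hU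
  have hUfin : U.Finite := hfin.image _
  have hne : (Uᶜ).Nonempty := (hUfin.infinite_compl).nonempty
  have hmem : slot B G q ∈ Uᶜ := by
    rw [slot_eq]
    exact Nat.sInf_mem hne
  have hq'U : slot B G q' ∈ U := by
    refine ⟨q', hq', ?_⟩
    exact slotF_stable B G q.1 q' (by exact hq'.2.1)
  intro hcon
  rw [hcon] at hmem
  exact hmem hq'U

/-! ### the code -/

open scoped Classical in
/-- the code of a point: at slot `j` record the mod-3 position of the point at the
scale of the (unique) slot-`j` cube whose tripled cube contains it. -/
noncomputable def codeFun (B : Set (DyIdx d)) (G : Set (EuclideanSpace ℝ (Fin d)))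
    (x : EuclideanSpace ℝ (Fin d)) (j : ℕ) : Option (Fin d → ZMod 3) :=
  if h : ∃ r, r ∈ B ∧ slot B G r = j ∧ x ∈ idx3 r then
    some (fun i => ((cf (x i) h.choose.1 : ℤ) : ZMod 3))
  else none

lemma scale_unique {N : ℕ} {G : Set (EuclideanSpace ℝ (Fin d))} {B : Set (DyIdx d)}
    (hover : ∀ x ∈ G, ∀ S : Finset (DyIdx d),
      (↑S : Set (DyIdx d)) ⊆ B → (∀ q ∈ S, x ∈ idx7 q) → S.card ≤ N)
    (hzsel : ∀ q : DyIdx d, q ∈ B → ∃ p, p ∈ idx3 q ∧ p ∈ G)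
    {r r' : DyIdx d} (hr : r ∈ B) (hr' : r' ∈ B) (hs : slot B G r = slot B G r')
    {x : EuclideanSpace ℝ (Fin d)} (hxG : x ∈ G) (hx : x ∈ idx3 r) (hx' : x ∈ idx3 r') :
    r.1 = r'.1 := by
  rcases lt_trichotomy r.1 r'.1 with h | h | h
  · obtain ⟨p, hp3, hpG⟩ := hzsel r' hr'
    have hnbr : r ∈ NbrS B G r' := ⟨hr, h, x, hxG, hx, hx'⟩
    exact absurd hs.symm (slot_ne hover hr' hp3 hpG hnbr)
  · exact h
  · obtain ⟨p, hp3, hpG⟩ := hzsel r hr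
    have hnbr : r' ∈ NbrS B G r := ⟨hr', h, x, hxG, hx', hx⟩
    exact absurd hs (slot_ne hover hr hp3 hpG hnbr)

lemma codeFun_eval {N : ℕ} {G : Set (EuclideanSpace ℝ (Fin d))} {B : Set (DyIdx d)}
    (hover : ∀ x ∈ G, ∀ S : Finset (DyIdx d),
      (↑S : Set (DyIdx d)) ⊆ B → (∀ q ∈ S, x ∈ idx7 q) → S.card ≤ N)
    (hzsel : ∀ q : DyIdx d, q ∈ B → ∃ p, p ∈ idx3 q ∧ p ∈ G)
    {x : EuclideanSpace ℝ (Fin d)} {r : DyIdx d} {j : ℕ}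
    (hxG : x ∈ G) (hr : r ∈ B) (hsl : slot B G r = j) (hx : x ∈ idx3 r) :
    codeFun B G x j = some (fun i => ((cf (x i) r.1 : ℤ) : ZMod 3)) := by
  have hex : ∃ r', r' ∈ B ∧ slot B G r' = j ∧ x ∈ idx3 r' := ⟨r, hr, hsl, hx⟩
  rw [codeFun, dif_pos hex]
  have hsc : hex.choose.1 = r.1 :=
    scale_unique hover hzsel hex.choose_spec.1 hr
      (hex.choose_spec.2.1.trans hsl.symm) hxG hex.choose_spec.2.2 hx
  simp only [hsc]

lemma mem3_construct {x : EuclideanSpace ℝ (Fin d)} {t : ℕ} {c : Fin d → Fin (2 ^ t)}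
    (h : ∀ i, ((c i : ℕ) : ℤ) ≤ cf (x i) t + 1 ∧ cf (x i) t ≤ ((c i : ℕ) : ℤ))
    (hx1 : ∀ i, x i ≤ 1) :
    x ∈ idx3 (⟨t, c⟩ : DyIdx d) := by
  intro i
  obtain ⟨hA, hB⟩ := h i
  have hAr : ((c i : ℕ) : ℝ) - 1 ≤ (cf (x i) t : ℝ) := by
    have : ((c i : ℕ) : ℤ) - 1 ≤ cf (x i) t := by omega
    exact_mod_cast this
  have hBr : (cf (x i) t : ℝ) ≤ ((c i : ℕ) : ℝ) := by exact_mod_cast hB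
  constructor
  · apply scale_mem_le
    have h1 := cf_le_mul (x i) t
    linarith
  · apply scale_mem_lt
    have h2 := mul_le_cf_add_one (hx1 i) t
    linarith

end CodingAux

/-- **Coding lemma.** If `B` is a collection of dyadic cubes of `[0,1]^d` with
`3Q ∩ G ≠ ∅` for all `Q ∈ B`, and each `x ∈ G` lies in at most `N` cubes `7Q` with
`Q ∈ B`, then with `M = (3^d + 1)^N` there are sets `F₁, …, F_M` with
`G = F₁ ∪ … ∪ F_M` such that whenever `x ≠ y` lie in the same `F i` and `Q` is a
dyadic cube of minimal side length with `x, y ∈ 3Q`, then `Q ∉ B`. -/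
theorem coding_decomposition (d N : ℕ) (G : Set (EuclideanSpace ℝ (Fin d)))
    (hG : G ⊆ unitCube d) (B : Set (DyIdx d))
    (hmeet : ∀ q ∈ B, (idx3 q ∩ G).Nonempty)
    (hover : ∀ x ∈ G, ∀ S : Finset (DyIdx d),
      (↑S : Set (DyIdx d)) ⊆ B → (∀ q ∈ S, x ∈ idx7 q) → S.card ≤ N) :
    ∃ F : Fin ((3 ^ d + 1) ^ N) → Set (EuclideanSpace ℝ (Fin d)),
      G = ⋃ i, F i ∧
      ∀ i, ∀ x ∈ F i, ∀ y ∈ F i, x ≠ y →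
        ∀ q : DyIdx d, x ∈ idx3 q → y ∈ idx3 q →
          (∀ q' : DyIdx d, x ∈ idx3 q' → y ∈ idx3 q' → q'.1 ≤ q.1) →
          q ∉ B := by
  classical
  have hzsel : ∀ q : DyIdx d, q ∈ B → ∃ p, p ∈ idx3 q ∧ p ∈ G := by
    intro q hq
    obtain ⟨p, hp⟩ := hmeet q hq
    exact ⟨p, hp.1, hp.2⟩
  have hcard : Fintype.card (Fin N → Option (Fin d → ZMod 3)) = (3 ^ d + 1) ^ N := by
    rw [Fintype.card_fun, Fintype.card_option, Fintype.card_fun]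
    simp
  let e := Fintype.equivFinOfCardEq hcard
  refine ⟨fun i => {x | x ∈ G ∧ e (fun j : Fin N => CodingAux.codeFun B G x (j : ℕ)) = i},
    ?_, ?_⟩
  · ext x
    simp only [Set.mem_iUnion, Set.mem_setOf_eq]
    exact ⟨fun hx => ⟨_, hx, rfl⟩, fun ⟨i, hx, _⟩ => hx⟩
  · rintro i x ⟨hxG, hxc⟩ y ⟨hyG, hyc⟩ hxy q hx3 hy3 hmax hqB
    have hcode : (fun j : Fin N => CodingAux.codeFun B G x (j : ℕ))
        = (fun j : Fin N => CodingAux.codeFun B G y (j : ℕ)) :=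
      e.injective (hxc.trans hyc.symm)
    obtain ⟨z, hz3, hzG⟩ := hzsel q hqB
    have hjN : CodingAux.slot B G q < N := CodingAux.slot_lt hover hqB hz3 hzG
    have hj := congrFun hcode ⟨CodingAux.slot B G q, hjN⟩
    simp only at hj
    rw [CodingAux.codeFun_eval hover hzsel hxG hqB rfl hx3,
      CodingAux.codeFun_eval hover hzsel hyG hqB rfl hy3] at hj
    have hj2 : ∀ i : Fin d,
        ((CodingAux.cf (x i) q.1 : ℤ) : ZMod 3) = ((CodingAux.cf (y i) q.1 : ℤ) : ZMod 3) :=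
      fun i => congrFun (Option.some.inj hj) i
    have hfe : ∀ i : Fin d, CodingAux.cf (x i) q.1 = CodingAux.cf (y i) q.1 := by
      intro i
      have h1 := CodingAux.cf_window_of_mem3 hx3 i
      have h2 := CodingAux.cf_window_of_mem3 hy3 i
      have h3 : (3:ℤ) ∣ (CodingAux.cf (y i) q.1 - CodingAux.cf (x i) q.1) :=
        Int.ModEq.dvd ((ZMod.intCast_eq_intCast_iff _ _ _).1 (hj2 i))
      omega
    -- build a common tripled cube at the finer scale `q.1 + 1`
    have hxu := hG hxG
    have hyu := hG hyG
    have hbound : ∀ i : Fin d,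
        0 ≤ max (CodingAux.cf (x i) (q.1 + 1)) (CodingAux.cf (y i) (q.1 + 1)) ∧
        max (CodingAux.cf (x i) (q.1 + 1)) (CodingAux.cf (y i) (q.1 + 1)) ≤ 2 ^ (q.1 + 1) - 1 := by
      intro i
      constructor
      · exact le_max_of_le_left (CodingAux.cf_nonneg (hxu i).1 _)
      · exact max_le (CodingAux.cf_le _ _) (CodingAux.cf_le _ _)
    let c : Fin d → Fin (2 ^ (q.1 + 1)) := fun i =>
      ⟨(max (CodingAux.cf (x i) (q.1 + 1)) (CodingAux.cf (y i) (q.1 + 1))).toNat, by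
        obtain ⟨hb0, hb1⟩ := hbound i
        have hcast : ((2 ^ (q.1 + 1) : ℕ) : ℤ) = 2 ^ (q.1 + 1) := by push_cast; ring
        omega⟩
    have hcval : ∀ i : Fin d, ((c i : ℕ) : ℤ)
        = max (CodingAux.cf (x i) (q.1 + 1)) (CodingAux.cf (y i) (q.1 + 1)) := by
      intro i
      exact Int.toNat_of_nonneg (hbound i).1
    have hwin : ∀ i : Fin d,
        max (CodingAux.cf (x i) (q.1 + 1)) (CodingAux.cf (y i) (q.1 + 1))
          ≤ CodingAux.cf (x i) (q.1 + 1) + 1 ∧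
        max (CodingAux.cf (x i) (q.1 + 1)) (CodingAux.cf (y i) (q.1 + 1))
          ≤ CodingAux.cf (y i) (q.1 + 1) + 1 := by
      intro i
      have hx1 := CodingAux.two_cf_le_cf_succ (hxu i).1 q.1
      have hx2 := CodingAux.cf_succ_le_two_cf_add_one (x i) q.1
      have hy1 := CodingAux.two_cf_le_cf_succ (hyu i).1 q.1
      have hy2 := CodingAux.cf_succ_le_two_cf_add_one (y i) q.1
      have hfei := hfe i
      omega
    have hxc3 : x ∈ idx3 (⟨q.1 + 1, c⟩ : DyIdx d) := by
      refine CodingAux.mem3_construct (fun i => ?_) (fun i => (hxu i).2)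
      rw [hcval i]
      exact ⟨(hwin i).1, le_max_left _ _⟩
    have hyc3 : y ∈ idx3 (⟨q.1 + 1, c⟩ : DyIdx d) := by
      refine CodingAux.mem3_construct (fun i => ?_) (fun i => (hyu i).2)
      rw [hcval i]
      exact ⟨(hwin i).2, le_max_right _ _⟩
    have := hmax ⟨q.1 + 1, c⟩ hxc3 hyc3
    simp only at this
    omega

end
end

section
/- Let 0 < δ < 1/2, let P ∈ ℕ satisfy 1/P ≤ (3/4)δ and P > 1 + 1/δ, and set ε = δ/(28P). Let E ⊆ [0,1]^d, let x, y ∈ E be distinct, and let Q be a dyadic cube in [0,1]^d with x, y ∈ 3Q, side(Q) ≤ 2|x−y|, and sparse(E, 7Q) < ε. Then there exists a δ|x−y|-chain from x to y consisting of points of E whose length is at most (1+δ)|x−y|. -/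
open Metric

noncomputable section

/-- An `η`-chain from `x` to `y` consisting of points of `E`, of length at most `L`:
a finite list `z 0 = x, …, z m = y` of points of `E` with consecutive distances `< η`
and total length `Σ dist(z i, z (i+1)) ≤ L`. -/
def IsChainFromTo {X : Type*} [MetricSpace X] (η : ℝ) (E : Set X) (x y : X) (L : ℝ) : Prop :=
  ∃ (m : ℕ) (z : ℕ → X), z 0 = x ∧ z m = y ∧ (∀ i ≤ m, z i ∈ E) ∧
    (∀ i < m, dist (z i) (z (i + 1)) < η) ∧
    ∑ i ∈ Finset.range m, dist (z i) (z (i + 1)) ≤ L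

set_option maxHeartbeats 1000000 in
/-- **Chain construction.** Let `0 < δ < 1/2`, let `P ∈ ℕ` satisfy `1/P ≤ (3/4)δ` and
`P > 1 + 1/δ`, and set `ε = δ/(28P)`. If `E ⊆ [0,1]^d`, `x ≠ y` are points of `E`, and
`Q` is a dyadic cube of `[0,1]^d` with `x, y ∈ 3Q`, `side(Q) ≤ 2|x-y|` and
`sparse(E,7Q) < ε`, then there is a `δ|x-y|`-chain from `x` to `y` in `E` of length at
most `(1+δ)|x-y|`. -/
theorem chain_construction (d : ℕ) (δ : ℝ) (hδ0 : 0 < δ) (hδ : δ < 1 / 2)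
    (P : ℕ) (hP1 : 1 / (P : ℝ) ≤ 3 / 4 * δ) (hP2 : (P : ℝ) > 1 + 1 / δ)
    (E : Set (EuclideanSpace ℝ (Fin d))) (hE : E ⊆ unitCube d)
    (x y : EuclideanSpace ℝ (Fin d)) (hx : x ∈ E) (hy : y ∈ E) (hxy : x ≠ y)
    (k : ℕ) (a : Fin d → ℕ) (ha : ∀ i, a i < 2 ^ k)
    (hx3 : x ∈ dyCube3 d k a) (hy3 : y ∈ dyCube3 d k a)
    (hside : (2 : ℝ) ^ (-(k : ℤ)) ≤ 2 * dist x y)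
    (hsparse : sparse7 E k a < δ / (28 * P)) :
    IsChainFromTo (δ * dist x y) E x y ((1 + δ) * dist x y) := by
  classical
  set s : ℝ := (2 : ℝ) ^ (-(k : ℤ)) with hs_def
  have hs : 0 < s := by positivity
  set D : ℝ := dist x y with hD_def
  have hD : 0 < D := dist_pos.mpr hxy
  have hP0 : (0 : ℝ) < P := by
    have h1δ : 0 < 1 / δ := by positivity
    linarith
  have hPnat : 0 < P := by exact_mod_cast hP0
  set c : ℝ := δ * s / (4 * P) with hc_def
  have hc : 0 < c := by positivity
  set S : Set (EuclideanSpace ℝ (Fin d)) := dyCube7 d k a ∩ E with hS_def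
  simp only [dyCube3, Set.mem_setOf_eq, ← hs_def] at hx3 hy3
  have hx7 : x ∈ dyCube7 d k a := by
    intro i
    simp only [← hs_def]
    have h := hx3 i
    constructor <;> nlinarith [h.1, h.2]
  have hy7 : y ∈ dyCube7 d k a := by
    intro i
    simp only [← hs_def]
    have h := hy3 i
    constructor <;> nlinarith [h.1, h.2]
  have hxS : x ∈ S := ⟨hx7, hx⟩
  have hSne : S.Nonempty := ⟨x, hxS⟩
  -- segment points
  set w : ℕ → EuclideanSpace ℝ (Fin d) :=
    fun j => x + ((j : ℝ) / P) • (y - x) with hw_def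
  have hw_apply : ∀ (j : ℕ) (i : Fin d),
      w j i = x i + ((j : ℝ) / P) * (y i - x i) := by
    intro j i
    simp [hw_def, PiLp.add_apply, PiLp.smul_apply, PiLp.sub_apply, smul_eq_mul]
  have hw0 : w 0 = x := by simp [hw_def]
  have hwP : w P = y := by
    simp only [hw_def]
    rw [div_self (ne_of_gt hP0), one_smul]
    abel
  have hw7 : ∀ j, j ≤ P → w j ∈ dyCube7 d k a := by
    intro j hj i
    have ht0 : 0 ≤ (j : ℝ) / P := by positivity
    have ht1 : (j : ℝ) / P ≤ 1 := by
      rw [div_le_one hP0]; exact_mod_cast hj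
    have hxi := hx3 i
    have hyi := hy3 i
    simp only [← hs_def, Set.mem_setOf_eq]
    rw [hw_apply]
    set t := (j : ℝ) / P
    constructor
    · nlinarith [mul_nonneg (sub_nonneg.mpr ht1) (sub_nonneg.mpr hxi.1),
        mul_nonneg ht0 (sub_nonneg.mpr hyi.1)]
    · nlinarith [mul_nonneg (sub_nonneg.mpr ht1) (sub_nonneg.mpr hxi.2.le),
        mul_nonneg ht0 (sub_nonneg.mpr hyi.2.le)]
  -- every point of 7Q is within c of S
  have hbdd : BddAbove (Set.range fun v : (dyCube7 d k a) =>
      Metric.infDist (v : EuclideanSpace ℝ (Fin d)) S) := by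
    refine ⟨Real.sqrt d * (7 * s), ?_⟩
    rintro r ⟨v, rfl⟩
    have hvx : dist (v : EuclideanSpace ℝ (Fin d)) x ≤ Real.sqrt d * (7 * s) := by
      rw [EuclideanSpace.dist_eq]
      have hcoord : ∀ i : Fin d,
          dist ((v : EuclideanSpace ℝ (Fin d)) i) (x i) ^ 2 ≤ (7 * s) ^ 2 := by
        intro i
        have h1 := v.2 i
        simp only [dyCube7, Set.mem_setOf_eq, ← hs_def] at h1
        have h2 := hx7 i
        simp only [← hs_def] at h2
        rw [Real.dist_eq]
        have habs : |(v : EuclideanSpace ℝ (Fin d)) i - x i| ≤ 7 * s := by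
          rw [abs_le]
          constructor <;> nlinarith [h1.1, h1.2, h2.1, h2.2]
        nlinarith [abs_nonneg ((v : EuclideanSpace ℝ (Fin d)) i - x i)]
      calc Real.sqrt (∑ i, dist ((v : EuclideanSpace ℝ (Fin d)) i) (x i) ^ 2)
          ≤ Real.sqrt (∑ _i : Fin d, (7 * s) ^ 2) :=
            Real.sqrt_le_sqrt (Finset.sum_le_sum fun i _ => hcoord i)
        _ = Real.sqrt ((d : ℝ) * (7 * s) ^ 2) := by
            rw [Finset.sum_const, Finset.card_univ, Fintype.card_fin, nsmul_eq_mul]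
        _ = Real.sqrt d * (7 * s) := by
            rw [Real.sqrt_mul (by positivity), Real.sqrt_sq (by positivity)]
    exact le_trans (Metric.infDist_le_dist_of_mem hxS) hvx
  have hsup_lt : (⨆ v : (dyCube7 d k a),
      Metric.infDist (v : EuclideanSpace ℝ (Fin d)) S) < c := by
    have h7s : (0 : ℝ) < 7 * s := by positivity
    have heq : (⨆ v : (dyCube7 d k a),
        Metric.infDist (v : EuclideanSpace ℝ (Fin d)) S) = sparse7 E k a * (7 * s) := by
      rw [sparse7, ← hs_def, ← hS_def, div_mul_cancel₀ _ (ne_of_gt h7s)]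
    rw [heq]
    have h1 : sparse7 E k a * (7 * s) < (δ / (28 * P)) * (7 * s) :=
      mul_lt_mul_of_pos_right hsparse h7s
    have h2 : (δ / (28 * P)) * (7 * s) = c := by
      rw [hc_def]; field_simp; ring
    linarith
  have hnear : ∀ j, j ≤ P → ∃ zj ∈ S, dist (w j) zj < c := by
    intro j hj
    have h1 : Metric.infDist (w j) S < c := by
      have h2 := le_ciSup hbdd (⟨w j, hw7 j hj⟩ : dyCube7 d k a)
      exact lt_of_le_of_lt h2 hsup_lt
    exact (Metric.infDist_lt_iff hSne).mp h1
  have hkey : ∀ j : ℕ, ∃ zj, zj ∈ S ∧ dist (w (min j P)) zj < c := by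
    intro j
    obtain ⟨zj, h1, h2⟩ := hnear (min j P) (min_le_right _ _)
    exact ⟨zj, h1, h2⟩
  choose g hg1 hg2 using hkey
  set z : ℕ → EuclideanSpace ℝ (Fin d) :=
    fun j => if j = 0 then x else if P ≤ j then y else g j with hz_def
  have hz0 : z 0 = x := by simp [hz_def]
  have hzP : z P = y := by simp [hz_def, hPnat.ne']
  have hzE : ∀ j, j ≤ P → z j ∈ E := by
    intro j hj
    by_cases h0 : j = 0
    · simpa [hz_def, h0] using hx
    · by_cases hP : P ≤ j
      · simpa [hz_def, h0, hP] using hy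
      · have : z j = g j := by simp [hz_def, h0, hP]
        rw [this]; exact (hg1 j).2
  have hclose : ∀ j, j ≤ P → dist (z j) (w j) < c := by
    intro j hj
    by_cases h0 : j = 0
    · subst h0; rw [hz0, hw0, dist_self]; exact hc
    · by_cases hP : P ≤ j
      · have hjP : j = P := le_antisymm hj hP
        subst hjP; rw [hzP, hwP, dist_self]; exact hc
      · have hzj : z j = g j := by simp [hz_def, h0, hP]
        have hmin : min j P = j := min_eq_left hj
        rw [hzj, dist_comm]
        have := hg2 j
        rwa [hmin] at this
  have hww : ∀ i : ℕ, dist (w i) (w (i + 1)) = D / P := by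
    intro i
    have h1 : w i - w (i + 1) = ((i : ℝ) / P - ((i : ℝ) + 1) / P) • (y - x) := by
      simp only [hw_def, Nat.cast_add, Nat.cast_one, sub_smul]
      abel
    rw [dist_eq_norm, h1, norm_smul]
    have h2 : (i : ℝ) / P - ((i : ℝ) + 1) / P = -(1 / P) := by ring
    rw [h2, norm_neg, Real.norm_eq_abs, abs_of_pos (by positivity)]
    rw [← dist_eq_norm, dist_comm, ← hD_def]
    ring
  have h2c : 2 * c ≤ δ * D / P := by
    have hsD : s ≤ 2 * D := hside
    calc 2 * c = (δ * s) / (2 * P) := by rw [hc_def]; ring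
      _ ≤ (δ * (2 * D)) / (2 * P) := by
          apply div_le_div_of_nonneg_right ?_ (by positivity)
          exact mul_le_mul_of_nonneg_left hsD hδ0.le
      _ = δ * D / P := by field_simp
  have hstep : ∀ i, i < P → dist (z i) (z (i + 1)) ≤ (1 + δ) * D / P := by
    intro i hi
    have h1 := hclose i hi.le
    have h2 := hclose (i + 1) hi
    have h3 := hww i
    have h4 : dist (z i) (z (i + 1)) ≤
        dist (z i) (w i) + dist (w i) (w (i + 1)) + dist (w (i + 1)) (z (i + 1)) :=
      dist_triangle4 _ _ _ _
    rw [dist_comm (w (i + 1))] at h4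
    have : (1 + δ) * D / P = D / P + δ * D / P := by ring
    rw [this]
    linarith
  have hstepδ : (1 + δ) * D / P < δ * D := by
    rw [div_lt_iff₀ hP0]
    have hδinv : δ * (1 + 1 / δ) = δ + 1 := by field_simp
    have h1 : δ * (1 + 1 / δ) < δ * P := mul_lt_mul_of_pos_left hP2 hδ0
    rw [hδinv] at h1
    nlinarith
  refine ⟨P, z, hz0, hzP, hzE, ?_, ?_⟩
  · intro i hi
    calc dist (z i) (z (i + 1)) ≤ (1 + δ) * D / P := hstep i hi
      _ < δ * D := hstepδ
  · calc ∑ i ∈ Finset.range P, dist (z i) (z (i + 1))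
        ≤ ∑ _i ∈ Finset.range P, (1 + δ) * D / P :=
          Finset.sum_le_sum fun i hi => hstep i (Finset.mem_range.mp hi)
      _ = P * ((1 + δ) * D / P) := by
          rw [Finset.sum_const, Finset.card_range, nsmul_eq_mul]
      _ = (1 + δ) * D := by field_simp
end
end
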